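/- Fix σ > 0, θ, and cut-offs 0 = α_0 < α_1 < ⋯ < α_J = 1 with corresponding normal quantile cut points c_j = Φ^{−1}(1 − α_j) (scaled by σ and shifted by a common null). For any probability vector π = (π_1,…,π_J) with all π_j > 0, there exists a positive weight vector ρ = (ρ_1,…,ρ_J) (unique up to scaling, with ρ_1 = 1 after normalization) such that the fixed effects publication bias density Σ_j π*_j(ρ) φ_{[c_j, c_{j−1})}(x; θ, σ) equals the p-hacking density Σ_j π_j φ_{[c_j, c_{j−1})}(x; θ, σ), where π*_j(ρ) = ρ_j m_j / Σ_k ρ_k m_k and m_j = Φ(c_{j−1}; θ, σ) − Φ(c_j; θ, σ). Explicitly, ρ_j = (π_j / m_j) / (π_1 / m_1) solves the system. -/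

import Mathlib

open MeasureTheory Set Finset

/-- The density of `N(θ, σ²)`. -/
noncomputable def normpdf (θ σ x : ℝ) : ℝ :=
  (σ * Real.sqrt (2 * Real.pi))⁻¹ * Real.exp (-(x - θ) ^ 2 / (2 * σ ^ 2))

/-- The standard normal CDF `Φ`. -/
noncomputable def Phi (x : ℝ) : ℝ := ∫ t in Set.Iic x, normpdf 0 1 t

open Filter

lemma normpdf_pos (θ σ x : ℝ) (hσ : 0 < σ) : 0 < normpdf θ σ x := by
  unfold normpdf
  positivity

lemma integrable_normpdf (θ σ : ℝ) (hσ : 0 < σ) : Integrable (normpdf θ σ) := by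
  have hb : (0:ℝ) < 1 / (2 * σ ^ 2) := by positivity
  have h1 : Integrable (fun x : ℝ => Real.exp (-(1 / (2 * σ ^ 2)) * x ^ 2)) :=
    integrable_exp_neg_mul_sq hb
  have h2 := (h1.comp_sub_right θ).const_mul ((σ * Real.sqrt (2 * Real.pi))⁻¹)
  refine h2.congr (Filter.Eventually.of_forall fun x => ?_)
  unfold normpdf
  ring_nf

lemma normpdf_total : ∫ x : ℝ, normpdf 0 1 x = 1 := by
  have h : ∫ x : ℝ, Real.exp (-(1/2 : ℝ) * x ^ 2) = Real.sqrt (Real.pi / (1/2)) :=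
    integral_gaussian (1/2)
  have : ∫ x : ℝ, normpdf 0 1 x
      = (1 * Real.sqrt (2 * Real.pi))⁻¹ * ∫ x : ℝ, Real.exp (-(1/2 : ℝ) * x ^ 2) := by
    rw [← MeasureTheory.integral_const_mul]
    congr 1; ext x; unfold normpdf; ring_nf
  rw [this, h]
  have : Real.pi / (1/2) = 2 * Real.pi := by ring
  rw [this, one_mul, inv_mul_cancel₀]
  positivity

lemma Phi_eq (x : ℝ) : Phi x = Phi 0 + ∫ t in (0:ℝ)..x, normpdf 0 1 t := by
  have h := intervalIntegral.integral_Iic_sub_Iic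
    (f := normpdf 0 1) (μ := volume) (a := (0:ℝ)) (b := x)
    ((integrable_normpdf 0 1 one_pos).integrableOn)
    ((integrable_normpdf 0 1 one_pos).integrableOn)
  unfold Phi
  linarith [h]

lemma Phi_continuous : Continuous Phi := by
  have := (integrable_normpdf 0 1 one_pos).continuous_primitive 0
  have h2 : Phi = fun x => Phi 0 + ∫ t in (0:ℝ)..x, normpdf 0 1 t := funext Phi_eq
  rw [h2]
  exact continuous_const.add this

lemma Phi_tendsto_atBot : Tendsto Phi atBot (nhds 0) := by
  have h := MeasureTheory.intervalIntegral_tendsto_integral_Iic (μ := volume)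
    (f := normpdf 0 1) (a := fun x : ℝ => x) (l := atBot) 0
    ((integrable_normpdf 0 1 one_pos).integrableOn) tendsto_id
  have h2 : Tendsto (fun x : ℝ => Phi 0 - ∫ t in x..(0:ℝ), normpdf 0 1 t) atBot
      (nhds (Phi 0 - Phi 0)) := tendsto_const_nhds.sub h
  simp only [sub_self] at h2
  refine h2.congr fun x => ?_
  rw [Phi_eq x, intervalIntegral.integral_symm]
  ring

lemma Phi_tendsto_atTop : Tendsto Phi atTop (nhds 1) := by
  have h := MeasureTheory.intervalIntegral_tendsto_integral_Ioi (μ := volume)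
    (f := normpdf 0 1) (b := fun x : ℝ => x) (l := atTop) 0
    ((integrable_normpdf 0 1 one_pos).integrableOn) tendsto_id
  have h2 : Tendsto (fun x : ℝ => Phi 0 + ∫ t in (0:ℝ)..x, normpdf 0 1 t) atTop
      (nhds (Phi 0 + ∫ t in Ioi (0:ℝ), normpdf 0 1 t)) := tendsto_const_nhds.add h
  have htot : Phi 0 + ∫ t in Ioi (0:ℝ), normpdf 0 1 t = 1 := by
    unfold Phi
    rw [intervalIntegral.integral_Iic_add_Ioi
      ((integrable_normpdf 0 1 one_pos).integrableOn)
      ((integrable_normpdf 0 1 one_pos).integrableOn), normpdf_total]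
  rw [htot] at h2
  exact h2.congr fun x => (Phi_eq x).symm

lemma Phi_surj {t : ℝ} (h0 : 0 < t) (h1 : t < 1) : ∃ y, Phi y = t := by
  obtain ⟨y₁, hy₁⟩ := (Phi_tendsto_atBot.eventually (eventually_lt_nhds h0)).exists
  obtain ⟨y₂, hy₂⟩ := (Phi_tendsto_atTop.eventually (eventually_gt_nhds h1)).exists
  have := intermediate_value_uIcc (a := y₁) (b := y₂) Phi_continuous.continuousOn
  obtain ⟨y, _, hy⟩ := this (by
    rw [Set.mem_uIcc]; left; exact ⟨hy₁.le, hy₂.le⟩)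
  exact ⟨y, hy⟩

/-- Equivalence of the publication bias and p-hacking models for fixed `σ`: for any
probability vector `π` with all components positive there is a positive weight vector
`ρ`, unique with the normalization `ρ_1 = 1` and given explicitly by
`ρ_j = (π_j/m_j)/(π_1/m_1)`, such that the publication bias mixture density with
weights `π*_j(ρ) = ρ_j m_j / Σ_k ρ_k m_k` equals the p-hacking mixture density with
weights `π`. -/
theorem stmt10 (θ σ : ℝ) (hσ : 0 < σ) (J : ℕ) (hJ : 0 < J)
    (αv : ℕ → ℝ) (hα0 : αv 0 = 0) (hαJ : αv J = 1)
    (hαmono : ∀ i j, i ≤ J → j ≤ J → i < j → αv i < αv j)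
    (π : ℕ → ℝ) (hπpos : ∀ j ∈ Finset.Icc 1 J, 0 < π j)
    (hπ1 : ∑ j ∈ Finset.Icc 1 J, π j = 1)
    (u : ℝ → ℝ) (hu : ∀ x, u x = 1 - Phi (x / σ))
    (S : ℕ → Set ℝ) (hS : ∀ j, S j = {x | u x ∈ Set.Ioc (αv (j - 1)) (αv j)})
    (m : ℕ → ℝ) (hm : ∀ j, m j = ∫ x in S j, normpdf θ σ x) :
    ∃ ρ : ℕ → ℝ,
      (∀ j ∈ Finset.Icc 1 J, 0 < ρ j) ∧ ρ 1 = 1 ∧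
      (∀ j ∈ Finset.Icc 1 J, ρ j = (π j / m j) / (π 1 / m 1)) ∧
      (∀ x, ∑ j ∈ Finset.Icc 1 J,
          (ρ j * m j / ∑ k ∈ Finset.Icc 1 J, ρ k * m k) *
            (Set.indicator (S j) (normpdf θ σ) x / m j) =
        ∑ j ∈ Finset.Icc 1 J, π j * (Set.indicator (S j) (normpdf θ σ) x / m j)) ∧
      (∀ ρ' : ℕ → ℝ, (∀ j ∈ Finset.Icc 1 J, 0 < ρ' j) → ρ' 1 = 1 →
        (∀ j ∈ Finset.Icc 1 J,
          ρ' j * m j / (∑ k ∈ Finset.Icc 1 J, ρ' k * m k) = π j) →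
        ∀ j ∈ Finset.Icc 1 J, ρ' j = ρ j) := by
  -- continuity of u
  have hucont : Continuous u := by
    have : Continuous fun x : ℝ => 1 - Phi (x / σ) :=
      continuous_const.sub (Phi_continuous.comp (continuous_id.div_const σ))
    exact (funext hu ▸ this)
  -- positivity of m j
  have hmpos : ∀ j ∈ Finset.Icc 1 J, 0 < m j := by
    intro j hj
    rw [Finset.mem_Icc] at hj
    obtain ⟨hj1, hjJ⟩ := hj
    have hab : αv (j - 1) < αv j :=
      hαmono (j - 1) j (le_trans (Nat.sub_le j 1) hjJ) hjJ (by omega)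
    have ha0 : 0 ≤ αv (j - 1) := by
      rcases Nat.eq_zero_or_pos (j - 1) with h | h
      · rw [h, hα0]
      · exact le_of_lt (hα0 ▸ hαmono 0 (j - 1) (Nat.zero_le J) (le_trans (Nat.sub_le j 1) hjJ) h)
    have hb1 : αv j ≤ 1 := by
      rcases eq_or_lt_of_le hjJ with h | h
      · rw [h, hαJ]
      · exact le_of_lt (hαJ ▸ hαmono j J hjJ le_rfl h)
    set t : ℝ := (αv (j - 1) + αv j) / 2 with ht
    have hat : αv (j - 1) < t := by rw [ht]; linarith
    have htb : t < αv j := by rw [ht]; linarith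
    have h0t : 0 < t := lt_of_le_of_lt ha0 hat
    have ht1 : t < 1 := lt_of_lt_of_le htb hb1
    obtain ⟨y, hy⟩ := Phi_surj (by linarith : (0:ℝ) < 1 - t) (by linarith : (1:ℝ) - t < 1)
    have hx0 : u (σ * y) = t := by
      rw [hu, mul_div_cancel_left₀ _ (ne_of_gt hσ), hy]; ring
    have hUopen : IsOpen (u ⁻¹' Set.Ioo (αv (j - 1)) (αv j)) :=
      isOpen_Ioo.preimage hucont
    have hx0U : σ * y ∈ u ⁻¹' Set.Ioo (αv (j - 1)) (αv j) := by
      simp only [Set.mem_preimage, Set.mem_Ioo, hx0]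
      exact ⟨hat, htb⟩
    have hUS : u ⁻¹' Set.Ioo (αv (j - 1)) (αv j) ⊆ S j := by
      rw [hS]
      intro x hx
      exact ⟨hx.1, hx.2.le⟩
    have hμS : 0 < volume (S j) :=
      lt_of_lt_of_le (hUopen.measure_pos volume ⟨σ * y, hx0U⟩) (measure_mono hUS)
    rw [hm]
    refine (MeasureTheory.setIntegral_pos_iff_support_of_nonneg_ae
      (Filter.Eventually.of_forall fun x => (normpdf_pos θ σ x hσ).le)
      ((integrable_normpdf θ σ hσ).integrableOn)).2 ?_
    have hsupp : Function.support (normpdf θ σ) = Set.univ :=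
      Set.eq_univ_of_forall fun x => ne_of_gt (normpdf_pos θ σ x hσ)
    rw [hsupp, Set.univ_inter]
    exact hμS
  have h1J : (1 : ℕ) ∈ Finset.Icc 1 J := by
    rw [Finset.mem_Icc]; exact ⟨le_rfl, hJ⟩
  have hm1 : 0 < m 1 := hmpos 1 h1J
  have hπ1pos : 0 < π 1 := hπpos 1 h1J
  have hbase : 0 < π 1 / m 1 := div_pos hπ1pos hm1
  refine ⟨fun j => (π j / m j) / (π 1 / m 1), ?_, ?_, fun j _ => rfl, ?_, ?_⟩
  · intro j hj
    exact div_pos (div_pos (hπpos j hj) (hmpos j hj)) hbase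
  · exact div_self (ne_of_gt hbase)
  · -- density identity
    have hsum : ∑ k ∈ Finset.Icc 1 J, (π k / m k) / (π 1 / m 1) * m k = m 1 / π 1 := by
      have hcongr : ∀ k ∈ Finset.Icc 1 J,
          (π k / m k) / (π 1 / m 1) * m k = π k * (m 1 / π 1) := by
        intro k hk
        have hmk := (hmpos k hk).ne'
        field_simp
      rw [Finset.sum_congr rfl hcongr, ← Finset.sum_mul, hπ1, one_mul]
    intro x
    refine Finset.sum_congr rfl fun j hj => ?_
    have hmj := (hmpos j hj).ne'
    have : (π j / m j) / (π 1 / m 1) * m j /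
        (∑ k ∈ Finset.Icc 1 J, (π k / m k) / (π 1 / m 1) * m k) = π j := by
      rw [hsum]
      field_simp
    rw [this]
  · -- uniqueness
    intro ρ' hρ'pos hρ'1 hρ'eq j hj
    set T := ∑ k ∈ Finset.Icc 1 J, ρ' k * m k with hT
    have hTpos : 0 < T :=
      Finset.sum_pos (fun k hk => mul_pos (hρ'pos k hk) (hmpos k hk)) ⟨1, h1J⟩
    have h1 := hρ'eq 1 h1J
    rw [hρ'1, one_mul] at h1
    have hj' := hρ'eq j hj
    have hmj := (hmpos j hj).ne'
    have hTval : T = m 1 / π 1 := by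
      field_simp at h1 ⊢
      linarith [h1]
    rw [hTval] at hj'
    have hπj := (hπpos j hj).ne'
    field_simp at hj' ⊢
    linarith [hj']
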